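/- arXiv:1701.05795 — 7 statements merged into one kernel-verified Lean document; each statement's English description precedes it below -/
import Mathlib

section
/- If λ ∈ ℂ is such that the boundary value problem -U'' = (ω² - λ²)U on (0,1), U(0) = 0, U'(1) = λU(1) has a nontrivial solution U, then either Im λ = 0, or Im λ ≠ 0 and Re λ > 0. -/
/-!
Multiplying `-U'' = (ω² - λ²) U` by `conj U` and integrating by parts gives
`λ |U(1)|² - ∫ |U'|² = (λ² - ω²) ∫ |U|²`, whose imaginary part reads
`Im λ · |U(1)|² = 2 Re λ · Im λ · ∫ |U|²`. If `Im λ ≠ 0` and `Re λ ≤ 0` this forces `U(1) = 0`,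
hence `U'(1) = λ U(1) = 0`, and uniqueness for the Cauchy problem at `x = 1` gives `U ≡ 0`.
-/

open Set ComplexConjugate

section SecondOrder

lemma ContDiff.differentiable_deriv_of_two {𝕜 F : Type*} [NontriviallyNormedField 𝕜]
    [NormedAddCommGroup F] [NormedSpace 𝕜 F] {f : 𝕜 → F} (hf : ContDiff 𝕜 2 f) :
    Differentiable 𝕜 (deriv f) :=
  (hf.deriv' (n := 1)).differentiable one_ne_zero

lemma ContDiff.continuous_deriv_deriv_of_two {𝕜 F : Type*} [NontriviallyNormedField 𝕜]
    [NormedAddCommGroup F] [NormedSpace 𝕜 F] {f : 𝕜 → F} (hf : ContDiff 𝕜 2 f) :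
    Continuous (deriv (deriv f)) :=
  (hf.deriv' (n := 1)).continuous_deriv_one

variable {U : ℝ → ℂ}

theorem integral_conj_mul_deriv_deriv (hU : ContDiff ℝ 2 U) (a b : ℝ) :
    ∫ x in a..b, conj (U x) * deriv (deriv U) x =
      conj (U b) * deriv U b - conj (U a) * deriv U a - ∫ x in a..b, ‖deriv U x‖ ^ 2 := by
  have hU' := hU.differentiable two_ne_zero
  have hconj : ∀ x, HasDerivAt (fun y => conj (U y)) (conj (deriv U x)) x :=
    fun x => (hU' x).hasDerivAt.star
  rw [intervalIntegral.integral_mul_deriv_eq_deriv_mul (fun x _ => hconj x)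
    (fun x _ => (hU.differentiable_deriv_of_two x).hasDerivAt)
    ((hU.continuous_deriv one_le_two).star.intervalIntegrable a b)
    (hU.continuous_deriv_deriv_of_two.intervalIntegrable a b), ← intervalIntegral.integral_ofReal]
  simp only [Complex.conj_mul', Complex.ofReal_pow]

theorem eqOn_zero_of_deriv_deriv_eq_mul {a b : ℝ} {c : ℂ} (hU : ContDiff ℝ 2 U)
    (hode : ∀ x ∈ Ioc a b, deriv (deriv U) x = c * U x) (hUb : U b = 0) (hU'b : deriv U b = 0) :
    EqOn U 0 (Icc a b) := by
  let L : ℂ × ℂ →L[ℝ] ℂ × ℂ :=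
    (ContinuousLinearMap.snd ℝ ℂ ℂ).prod (c • ContinuousLinearMap.fst ℝ ℂ ℂ)
  have hcauchy : ∀ x ∈ Ioc a b, HasDerivWithinAt (fun y => (U y, deriv U y))
      (L (U x, deriv U x)) (Iic x) x := fun x hx => by
    have := ((hU.differentiable two_ne_zero x).hasDerivAt.prodMk
      (hU.differentiable_deriv_of_two x).hasDerivAt).hasDerivWithinAt (s := Iic x)
    simpa [L, hode x hx] using this
  have hzero : ∀ x ∈ Ioc a b, HasDerivWithinAt (fun _ => (0 : ℂ × ℂ)) (L 0) (Iic x) x :=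
    fun x _ => by simpa using hasDerivWithinAt_const x (Iic x) (0 : ℂ × ℂ)
  have := ODE_solution_unique_of_mem_Icc_left (v := fun _ => L) (s := fun _ => univ)
    (fun _ _ => L.lipschitz.lipschitzOnWith)
    (hU.continuous.prodMk (hU.continuous_deriv one_le_two)).continuousOn hcauchy
    (fun _ _ => trivial) continuousOn_const hzero (fun _ _ => trivial) (by simp [hUb, hU'b])
  exact fun x hx => congrArg Prod.fst (this hx)

end SecondOrder

lemma sq_norm_eq_two_re_mul_integral_of_robin {ω : ℝ} {lam : ℂ} {U : ℝ → ℂ}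
    (hU : ContDiff ℝ 2 U)
    (hode : EqOn (deriv (deriv U)) (fun x => (lam ^ 2 - ω ^ 2) * U x) (Icc 0 1))
    (hbc0 : U 0 = 0) (hbc1 : deriv U 1 = lam * U 1) (him : lam.im ≠ 0) :
    ‖U 1‖ ^ 2 = 2 * lam.re * ∫ x in (0 : ℝ)..1, ‖U x‖ ^ 2 := by
  have hgreen := integral_conj_mul_deriv_deriv hU 0 1
  have hlhs : ∫ x in (0 : ℝ)..1, conj (U x) * deriv (deriv U) x =
      (lam ^ 2 - ω ^ 2) * ((∫ x in (0 : ℝ)..1, ‖U x‖ ^ 2 : ℝ) : ℂ) := by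
    rw [← intervalIntegral.integral_ofReal, ← intervalIntegral.integral_const_mul]
    refine intervalIntegral.integral_congr fun x hx => ?_
    rw [uIcc_of_le zero_le_one] at hx
    simp only [hode hx, Complex.ofReal_pow, ← Complex.conj_mul']
    ring
  rw [hlhs, hbc0, hbc1, map_zero, zero_mul, sub_zero, ← mul_assoc, mul_comm (conj _),
    mul_assoc, Complex.conj_mul'] at hgreen
  rw [← Complex.ofReal_pow ω, ← Complex.ofReal_pow ‖U 1‖] at hgreen
  have him_eq := congrArg Complex.im hgreen
  simp only [Complex.sub_im, Complex.mul_im, Complex.ofReal_re, Complex.ofReal_im,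
    sq lam] at him_eq
  exact mul_left_cancel₀ him (by linear_combination -him_eq)

/-- If the boundary value problem `-U'' = (ω² - λ²)U` on `(0,1)`, `U(0) = 0`,
`U'(1) = λ U(1)` has a nontrivial solution, then either `Im λ = 0`, or
`Im λ ≠ 0` and `Re λ > 0`. -/
theorem trapped_modes_stmt0 (ω : ℝ) (lam : ℂ) (U : ℝ → ℂ)
    (hU : ContDiff ℝ 2 U)
    (hode : ∀ x ∈ Set.Ioo (0:ℝ) 1,
      -(deriv (deriv U) x) = ((ω : ℂ)^2 - lam^2) * U x)
    (hbc0 : U 0 = 0)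
    (hbc1 : deriv U 1 = lam * U 1)
    (hnontriv : ∃ x ∈ Set.Icc (0:ℝ) 1, U x ≠ 0) :
    lam.im = 0 ∨ (lam.im ≠ 0 ∧ 0 < lam.re) := by
  rcases eq_or_ne lam.im 0 with him | him
  · exact Or.inl him
  refine Or.inr ⟨him, ?_⟩
  have hodeIcc : EqOn (deriv (deriv U)) (fun x => (lam ^ 2 - ω ^ 2) * U x) (Icc 0 1) := by
    rw [← closure_Ioo zero_ne_one]
    refine EqOn.closure (fun x hx => ?_) hU.continuous_deriv_deriv_of_two (by fun_prop)
    linear_combination -hode x hx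
  have hbdry := sq_norm_eq_two_re_mul_integral_of_robin hU hodeIcc hbc0 hbc1 him
  by_contra! hre
  have hU1 : U 1 = 0 := by
    have hA : 0 ≤ ∫ x in (0 : ℝ)..1, ‖U x‖ ^ 2 :=
      intervalIntegral.integral_nonneg zero_le_one fun x _ => by positivity
    have hle : ‖U 1‖ ^ 2 ≤ 0 := hbdry ▸ mul_nonpos_of_nonpos_of_nonneg (by linarith) hA
    exact norm_eq_zero.mp (pow_eq_zero_iff two_ne_zero |>.mp (le_antisymm hle (by positivity)))
  obtain ⟨x, hx, hUx⟩ := hnontriv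
  exact hUx (eqOn_zero_of_deriv_deriv_eq_mul hU (fun y hy => hodeIcc (Ioc_subset_Icc_self hy))
    hU1 (by rw [hbc1, hU1, mul_zero]) hx)
end

section
/- For ω = 0, the only solution (u,v) of the system (-i∂ₓ + ∂_y)v = 0, (-i∂ₓ - ∂_y)u = 0 on the strip Π = (0,1) × ℝ with boundary conditions u(0,y) = 0 and v(1,y) = 0, where u and v are continuously differentiable and bounded, is the trivial solution u = 0, v = 0. -/
/-!
Both equations are Cauchy–Riemann systems: `v` is holomorphic in `x + iy`, and so is
`u (1 - x) y`. A function holomorphic on a strip, `C¹` up to an edge on which it vanishes, has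
zero derivative along that edge: the tangential derivative is zero, and the Cauchy–Riemann
relation passes to the edge by continuity. So precomposing it with the projection onto the closed
half-plane bounded by that edge, i.e. continuing it by zero across the edge, gives a function
holomorphic on a half-plane that vanishes on an open set; by the identity theorem it is zero.
-/

open Complex Set Filter Topology Asymptotics

theorem HasFDerivAt.comp_zero_of_norm_sub_le {𝕜 E F : Type*} [NontriviallyNormedField 𝕜]
    [NormedAddCommGroup E] [NormedSpace 𝕜 E] [NormedAddCommGroup F] [NormedSpace 𝕜 F]
    {f : E → F} {p : E → E} {z : E} (hf : HasFDerivAt f (0 : E →L[𝕜] F) z)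
    (hp : ∀ x, ‖p x - z‖ ≤ ‖x - z‖) : HasFDerivAt (f ∘ p) (0 : E →L[𝕜] F) z := by
  have hpz : p z = z := by simpa [sub_eq_zero] using hp z
  have hp_tendsto : Tendsto p (𝓝 z) (𝓝 z) :=
    tendsto_iff_norm_sub_tendsto_zero.2 <| squeeze_zero (fun _ => norm_nonneg _) hp
      (tendsto_iff_norm_sub_tendsto_zero.1 tendsto_id)
  have hf' := (hf.isLittleO.comp_tendsto hp_tendsto).trans_isBigO
    (IsBigO.of_bound 1 (.of_forall fun x => by simpa [hpz] using hp x))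
  refine .of_isLittleO ?_
  simpa [hpz, Function.comp_def] using hf'

theorem ContinuousLinearMap.eq_zero_of_apply_one_of_apply_I {E : Type*} [NormedAddCommGroup E]
    [NormedSpace ℝ E] {L : ℂ →L[ℝ] E} (h1 : L 1 = 0) (hI : L I = 0) : L = 0 := by
  ext w
  rw [← re_add_im w, ← mul_one (w.re : ℂ), ← real_smul, ← real_smul, map_add, map_smul,
    map_smul]
  simp [h1, hI]

theorem HasFDerivAt.hasDerivAt_comp_ofReal_add {E : Type*} [NormedAddCommGroup E]
    [NormedSpace ℝ E] {F : ℂ → E} {L : ℂ →L[ℝ] E} {x y : ℝ} (hF : HasFDerivAt F L (x + y * I)) :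
    HasDerivAt (fun t : ℝ => F (t + y * I)) (L 1) x := by
  simpa [Function.comp_def] using
    hF.comp_hasDerivAt x ((hasDerivAt_id x).ofReal_comp.add_const _)

theorem HasFDerivAt.hasDerivAt_comp_add_ofReal_mul_I {E : Type*} [NormedAddCommGroup E]
    [NormedSpace ℝ E] {F : ℂ → E} {L : ℂ →L[ℝ] E} {x y : ℝ} (hF : HasFDerivAt F L (x + y * I)) :
    HasDerivAt (fun s : ℝ => F (x + s * I)) (L I) y := by
  simpa [Function.comp_def] using
    hF.comp_hasDerivAt y (((hasDerivAt_id y).ofReal_comp.mul_const I).const_add _)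

def clampRe (b : ℝ) (w : ℂ) : ℂ := ⟨min w.re b, w.im⟩

theorem clampRe_of_re_le {b : ℝ} {w : ℂ} (hw : w.re ≤ b) : clampRe b w = w := by
  simp [clampRe, hw]

theorem re_clampRe_of_le_re {b : ℝ} {w : ℂ} (hw : b ≤ w.re) : (clampRe b w).re = b := by
  simp [clampRe, hw]

theorem norm_clampRe_sub_le {b : ℝ} {z : ℂ} (hz : z.re ≤ b) (w : ℂ) :
    ‖clampRe b w - z‖ ≤ ‖w - z‖ := by
  rw [← dist_eq_norm, ← dist_eq_norm, dist_eq_re_im, dist_eq_re_im]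
  apply Real.sqrt_le_sqrt
  gcongr ?_ + _
  simp only [clampRe]
  rcases le_total w.re b with hw | hw
  · rw [min_eq_left hw]
  · rw [min_eq_right hw]
    nlinarith

section Strip

variable {E : Type*} [NormedAddCommGroup E] [NormedSpace ℂ E] {a b : ℝ} {f : ℂ → E}

theorem fderiv_eq_zero_of_cauchyRiemann_of_eq_zero_on_edge (hf : ContDiff ℝ 1 f) (hab : a < b)
    (hCR : ∀ z ∈ re ⁻¹' Ioo a b, fderiv ℝ f z I = I • fderiv ℝ f z 1)
    (hb : ∀ z : ℂ, z.re = b → f z = 0) {z : ℂ} (hz : z.re = b) : fderiv ℝ f z = 0 := by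
  have hCRz : fderiv ℝ f z I = I • fderiv ℝ f z 1 := by
    have hcont := hf.continuous_fderiv one_ne_zero
    refine EqOn.closure hCR (hcont.clm_apply continuous_const)
      ((hcont.clm_apply continuous_const).const_smul I) ?_
    rw [closure_preimage_re, closure_Ioo hab.ne, mem_preimage, hz]
    exact right_mem_Icc.2 hab.le
  have hI : fderiv ℝ f z I = 0 := by
    obtain ⟨x, y, rfl⟩ : ∃ x y : ℝ, z = x + y * I := ⟨z.re, z.im, (re_add_im z).symm⟩
    have hline : (fun s : ℝ => f (x + s * I)) = fun _ => 0 :=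
      funext fun s => hb _ (by simpa using hz)
    have := (hf.differentiable one_ne_zero (x + y * I)).hasFDerivAt
      |>.hasDerivAt_comp_add_ofReal_mul_I
    rw [hline] at this
    exact this.unique (hasDerivAt_const _ _)
  refine ContinuousLinearMap.eq_zero_of_apply_one_of_apply_I ?_ hI
  exact (smul_eq_zero.1 (hCRz.symm.trans hI)).resolve_left I_ne_zero

theorem differentiableOn_comp_clampRe (hf : ContDiff ℝ 1 f) (hab : a < b)
    (hCR : ∀ z ∈ re ⁻¹' Ioo a b, fderiv ℝ f z I = I • fderiv ℝ f z 1)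
    (hb : ∀ z : ℂ, z.re = b → f z = 0) :
    DifferentiableOn ℂ (f ∘ clampRe b) (re ⁻¹' Ioi a) := by
  intro w hw
  refine DifferentiableAt.differentiableWithinAt ?_
  rcases lt_trichotomy w.re b with hlt | heq | hgt
  · have hfw : DifferentiableAt ℂ f w :=
      differentiableAt_complex_iff_differentiableAt_real.2
        ⟨hf.differentiable one_ne_zero w, hCR w ⟨hw, hlt⟩⟩
    refine hfw.congr_of_eventuallyEq ?_
    filter_upwards [(isOpen_lt continuous_re continuous_const).mem_nhds hlt] with v hv
    simp [clampRe_of_re_le (le_of_lt hv)]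
  · have hfw : HasFDerivAt f (0 : ℂ →L[ℝ] E) w := by
      rw [← fderiv_eq_zero_of_cauchyRiemann_of_eq_zero_on_edge hf hab hCR hb heq]
      exact (hf.differentiable one_ne_zero w).hasFDerivAt
    have hcomp := hfw.comp_zero_of_norm_sub_le (norm_clampRe_sub_le heq.le)
    refine differentiableAt_complex_iff_differentiableAt_real.2 ⟨hcomp.differentiableAt, ?_⟩
    simp [hcomp.fderiv]
  · refine (differentiableAt_const (0 : E)).congr_of_eventuallyEq ?_
    filter_upwards [(isOpen_lt continuous_const continuous_re).mem_nhds hgt] with v hv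
    exact hb _ (re_clampRe_of_le_re hv.le)

theorem eqOn_zero_of_cauchyRiemann_of_eq_zero_on_edge [CompleteSpace E] (hf : ContDiff ℝ 1 f)
    (hab : a < b)
    (hCR : ∀ z ∈ re ⁻¹' Ioo a b, fderiv ℝ f z I = I • fderiv ℝ f z 1)
    (hb : ∀ z : ℂ, z.re = b → f z = 0) : EqOn f 0 (re ⁻¹' Icc a b) := by
  have hzero : EqOn (f ∘ clampRe b) 0 (re ⁻¹' Ioi a) := by
    refine ((differentiableOn_comp_clampRe hf hab hCR hb).analyticOnNhd
      (isOpen_Ioi.preimage continuous_re)).eqOn_zero_of_preconnected_of_eventuallyEq_zero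
      (convex_halfSpace_re_gt a).isPreconnected (z₀ := (b + 1 : ℝ)) (by simp; linarith) ?_
    filter_upwards [(isOpen_lt continuous_const continuous_re).mem_nhds
      (show b < ((b + 1 : ℝ) : ℂ).re by simp)] with v hv
    exact hb _ (re_clampRe_of_le_re hv.le)
  have hIoc : EqOn f 0 (re ⁻¹' Ioc a b) := fun w hw => by
    simpa [clampRe_of_re_le hw.2] using hzero hw.1
  simpa [closure_preimage_re, closure_Ioc hab.ne] using
    hIoc.closure hf.continuous continuous_const

end Strip

theorem eq_zero_of_cauchyRiemann_of_eq_zero_on_edge {E : Type*} [NormedAddCommGroup E]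
    [NormedSpace ℂ E] [CompleteSpace E] {a b : ℝ} {f : ℝ → ℝ → E}
    (hf : ContDiff ℝ 1 (fun p : ℝ × ℝ => f p.1 p.2)) (hab : a < b)
    (hCR : ∀ x ∈ Ioo a b, ∀ y : ℝ, deriv (fun s => f x s) y = I • deriv (fun t => f t y) x)
    (hb : ∀ y : ℝ, f b y = 0) : ∀ x ∈ Icc a b, ∀ y : ℝ, f x y = 0 := by
  set F : ℂ → E := fun z => f z.re z.im
  have hF : ContDiff ℝ 1 F := hf.comp equivRealProdCLM.contDiff
  have hpartial (x y : ℝ) : fderiv ℝ F (x + y * I) 1 = deriv (fun t => f t y) x ∧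
      fderiv ℝ F (x + y * I) I = deriv (fun s => f x s) y := by
    have hd : HasFDerivAt F _ (x + y * I) := (hF.differentiable one_ne_zero _).hasFDerivAt
    constructor
    · simpa [F] using hd.hasDerivAt_comp_ofReal_add.deriv.symm
    · simpa [F] using hd.hasDerivAt_comp_add_ofReal_mul_I.deriv.symm
  have hFzero :=
    eqOn_zero_of_cauchyRiemann_of_eq_zero_on_edge hF hab (fun z hz => ?_) (fun z hz => ?_)
  · intro x hx y
    simpa [F] using hFzero (show (x + y * I : ℂ) ∈ re ⁻¹' Icc a b by simpa using hx)
  · obtain ⟨x, y, rfl⟩ : ∃ x y : ℝ, z = x + y * I := ⟨z.re, z.im, (re_add_im z).symm⟩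
    rw [(hpartial x y).1, (hpartial x y).2]
    exact hCR x (by simpa using hz) y
  · simp [F, hz, hb]

theorem trapped_modes_stmt1_general (u v : ℝ → ℝ → ℂ)
    (hu : ContDiff ℝ 1 (fun p : ℝ × ℝ => u p.1 p.2))
    (hv : ContDiff ℝ 1 (fun p : ℝ × ℝ => v p.1 p.2))
    (heqv : ∀ x ∈ Set.Ioo (0:ℝ) 1, ∀ y : ℝ,
      -Complex.I * deriv (fun t => v t y) x + deriv (fun s => v x s) y = 0)
    (hequ : ∀ x ∈ Set.Ioo (0:ℝ) 1, ∀ y : ℝ,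
      -Complex.I * deriv (fun t => u t y) x - deriv (fun s => u x s) y = 0)
    (hbcu : ∀ y : ℝ, u 0 y = 0)
    (hbcv : ∀ y : ℝ, v 1 y = 0) :
    ∀ x ∈ Set.Icc (0:ℝ) 1, ∀ y : ℝ, u x y = 0 ∧ v x y = 0 := by
  have hv0 := eq_zero_of_cauchyRiemann_of_eq_zero_on_edge hv zero_lt_one
    (fun x hx y => by rw [smul_eq_mul]; linear_combination heqv x hx y) hbcv
  have hu0 := eq_zero_of_cauchyRiemann_of_eq_zero_on_edge (f := fun x y => u (1 - x) y)
    (hu.comp (((contDiff_const (c := (1 : ℝ))).sub contDiff_fst).prodMk contDiff_snd))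
    zero_lt_one
    (fun x hx y => by
      rw [deriv_comp_const_sub (f := fun t => u t y), smul_eq_mul]
      linear_combination -hequ (1 - x) ⟨by linarith [hx.2], by linarith [hx.1]⟩ y)
    (by simpa using hbcu)
  intro x hx y
  exact ⟨by simpa using hu0 (1 - x) ⟨by linarith [hx.2], by linarith [hx.1]⟩ y, hv0 x hx y⟩

/-- For `ω = 0`, the only bounded `C¹` solution `(u,v)` of
`(-i∂ₓ + ∂_y)v = 0`, `(-i∂ₓ - ∂_y)u = 0` on the strip `Π = (0,1) × ℝ` with
`u(0,y) = 0`, `v(1,y) = 0` is the trivial one. -/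
theorem trapped_modes_stmt1 (u v : ℝ → ℝ → ℂ)
    (hu : ContDiff ℝ 1 (fun p : ℝ × ℝ => u p.1 p.2))
    (hv : ContDiff ℝ 1 (fun p : ℝ × ℝ => v p.1 p.2))
    (hbound : ∃ M : ℝ, ∀ x ∈ Set.Icc (0:ℝ) 1, ∀ y : ℝ,
      ‖u x y‖ ≤ M ∧ ‖v x y‖ ≤ M)
    (heqv : ∀ x ∈ Set.Ioo (0:ℝ) 1, ∀ y : ℝ,
      -Complex.I * deriv (fun t => v t y) x + deriv (fun s => v x s) y = 0)
    (hequ : ∀ x ∈ Set.Ioo (0:ℝ) 1, ∀ y : ℝ,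
      -Complex.I * deriv (fun t => u t y) x - deriv (fun s => u x s) y = 0)
    (hbcu : ∀ y : ℝ, u 0 y = 0)
    (hbcv : ∀ y : ℝ, v 1 y = 0) :
    ∀ x ∈ Set.Icc (0:ℝ) 1, ∀ y : ℝ, u x y = 0 ∧ v x y = 0 :=
  trapped_modes_stmt1_general u v hu hv heqv hequ hbcu hbcv
end

section
/- Let ω > 1 and F(λ) = cos κ − λ sin(κ)/κ with κ² = ω² − λ². If λ₀ is a root of F with F'(λ₀) = 0, then λ₀ = 1 and ω satisfies (ω² − 1)/ω² = sin²(√(ω² − 1)). Consequently, all roots of F are simple unless ω is a threshold energy, in which case λ = 1 is the unique multiple root. -/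
/-!
Near any `λ₀` with `κ₀² = ω² - λ₀² ≠ 0` there is a holomorphic branch `κ(λ)` of the square
root, and `F(λ) = cos κ - λ sin κ / κ` for every branch, both terms being even in `κ`.
Differentiating with `κ κ' = -λ` gives `κ² F' = λ² F + ω² (λ - 1) S`. At a double root `S ≠ 0`,
since `C² + κ² S² = 1` and `C = λ S`; hence `λ₀ = 1`. Then `κ₀ = r = √(ω² - 1)` is real and
`F(1) = 0` reads `r cos r = sin r`, whence `sin² r = r² / (r² + 1) = (ω² - 1) / ω²`.
At `κ₀ = 0` instead `F(λ₀) = 1 - λ₀`, which would force `ω = 1`.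
-/

open Complex Filter Topology

noncomputable section

/- The paper's `C`, `S` and `F`, with the principal square root. -/
def cosSqrt (z : ℂ) : ℂ := cos (z ^ (1 / 2 : ℂ))

def sincSqrt (z : ℂ) : ℂ := if z = 0 then 1 else sin (z ^ (1 / 2 : ℂ)) / z ^ (1 / 2 : ℂ)

def dispersion (W lam : ℂ) : ℂ := cosSqrt (W ^ 2 - lam ^ 2) - lam * sincSqrt (W ^ 2 - lam ^ 2)

end

theorem cpow_half_sq (z : ℂ) : (z ^ (1 / 2 : ℂ)) ^ 2 = z := by
  rw [one_div, cpow_ofNat_inv_pow]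

theorem cosSqrt_eq_cos {z w : ℂ} (hw : w ^ 2 = z) : cosSqrt z = cos w := by
  rcases sq_eq_sq_iff_eq_or_eq_neg.1 ((cpow_half_sq z).trans hw.symm) with h | h
  · rw [cosSqrt, h]
  · rw [cosSqrt, h, cos_neg]

theorem sincSqrt_eq_sin_div {z w : ℂ} (hz : z ≠ 0) (hw : w ^ 2 = z) :
    sincSqrt z = sin w / w := by
  rcases sq_eq_sq_iff_eq_or_eq_neg.1 ((cpow_half_sq z).trans hw.symm) with h | h
  · rw [sincSqrt, if_neg hz, h]
  · rw [sincSqrt, if_neg hz, h, sin_neg, neg_div_neg_eq]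

theorem cosSqrt_sq_add_mul_sincSqrt_sq (z : ℂ) : cosSqrt z ^ 2 + z * sincSqrt z ^ 2 = 1 := by
  by_cases hz : z = 0
  · simp [cosSqrt, hz]
  obtain ⟨w, hw⟩ : ∃ w : ℂ, w ^ 2 = z := ⟨_, cpow_half_sq z⟩
  have hw0 : w ≠ 0 := by rintro rfl; exact hz (by simpa using hw.symm)
  rw [cosSqrt_eq_cos hw, sincSqrt_eq_sin_div hz hw, ← hw]
  field_simp
  linear_combination cos_sq_add_sin_sq w

theorem sincSqrt_ne_zero_of_dispersion_eq_zero {W lam : ℂ} (h : dispersion W lam = 0) :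
    sincSqrt (W ^ 2 - lam ^ 2) ≠ 0 := by
  intro hS
  have hC : cosSqrt (W ^ 2 - lam ^ 2) = 0 := by simpa [dispersion, hS] using h
  have h1 := cosSqrt_sq_add_mul_sincSqrt_sq (W ^ 2 - lam ^ 2)
  rw [hC, hS] at h1
  norm_num at h1

theorem exists_differentiableAt_sq_eq {f : ℂ → ℂ} {z : ℂ} (hf : DifferentiableAt ℂ f z)
    (hz : f z ≠ 0) : ∃ g : ℂ → ℂ, DifferentiableAt ℂ g z ∧ ∀ x, g x ^ 2 = f x := by
  rcases mem_slitPlane_or_neg_mem_slitPlane hz with hslit | hslit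
  · exact ⟨fun x => f x ^ (1 / 2 : ℂ), hf.cpow_const hslit, fun x => cpow_half_sq _⟩
  · refine ⟨fun x => I * (-f x) ^ (1 / 2 : ℂ), (hf.neg.cpow_const hslit).const_mul I, fun x => ?_⟩
    rw [mul_pow, cpow_half_sq, I_sq]
    ring

theorem dispersion_eq_one_sub_of_sq_sub_sq_eq_zero {W lam : ℂ} (h : W ^ 2 - lam ^ 2 = 0) :
    dispersion W lam = 1 - lam := by
  simp [dispersion, cosSqrt, sincSqrt, h]

theorem hasDerivAt_dispersion (W : ℂ) {lam : ℂ} (h : W ^ 2 - lam ^ 2 ≠ 0) :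
    HasDerivAt (dispersion W) ((lam ^ 2 * dispersion W lam
      + W ^ 2 * (lam - 1) * sincSqrt (W ^ 2 - lam ^ 2)) / (W ^ 2 - lam ^ 2)) lam := by
  obtain ⟨g, hg, hsq⟩ :=
    exists_differentiableAt_sq_eq (f := fun x => W ^ 2 - x ^ 2) (by fun_prop) h
  have hg0 : g lam ≠ 0 := fun h0 => h (by rw [← hsq, h0]; ring)
  have hgg' : g lam * deriv g lam = -lam := by
    have h1 := hg.hasDerivAt.mul hg.hasDerivAt
    have h2 : HasDerivAt (fun x => g x * g x) (-(2 * lam)) lam := by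
      simp only [← sq, hsq]
      simpa using (hasDerivAt_pow 2 lam).const_sub (W ^ 2)
    linear_combination (h1.unique h2) / 2
  have heq : dispersion W =ᶠ[𝓝 lam] fun x => cos (g x) - x * (sin (g x) / g x) := by
    filter_upwards [(by fun_prop : Continuous fun x : ℂ => W ^ 2 - x ^ 2).continuousAt.eventually_ne h]
      with x hx
    rw [dispersion, cosSqrt_eq_cos (hsq x), sincSqrt_eq_sin_div hx (hsq x)]
  have hderiv : deriv g lam = -lam / g lam := by rw [eq_div_iff hg0, mul_comm, hgg']
  have hW : W ^ 2 = g lam ^ 2 + lam ^ 2 := by rw [hsq]; ring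
  refine ((hg.hasDerivAt.ccos.sub ((hasDerivAt_id' lam).mul
    (hg.hasDerivAt.csin.div hg.hasDerivAt hg0))).congr_of_eventuallyEq heq).congr_deriv ?_
  rw [dispersion, cosSqrt_eq_cos (hsq lam), sincSqrt_eq_sin_div h (hsq lam), ← hsq lam, hderiv, hW,
    Pi.div_apply]
  field_simp
  ring

theorem div_add_one_eq_sin_sq_of_mul_cos_eq_sin {r : ℝ} (h : r * Real.cos r = Real.sin r) :
    r ^ 2 / (r ^ 2 + 1) = Real.sin r ^ 2 := by
  rw [div_eq_iff (by positivity)]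
  linear_combination (r * Real.cos r + Real.sin r) * h - r ^ 2 * Real.sin_sq_add_cos_sq r

/-- For `ω > 1`, if `λ₀` is a root of the dispersion function
`F(λ) = cos κ - λ sin(κ)/κ`, `κ² = ω² - λ²`, with `F'(λ₀) = 0`, then `λ₀ = 1`
and `ω` is a threshold energy: `(ω² - 1)/ω² = sin²(√(ω² - 1))`. -/
theorem trapped_modes_stmt7 (ω : ℝ) (hω : 1 < ω) (lam₀ : ℂ)
    (hroot :
      (fun lam : ℂ =>
        Complex.cos (((ω : ℂ)^2 - lam^2) ^ ((1 : ℂ)/2)) -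
          lam * (if (ω : ℂ)^2 - lam^2 = 0 then 1 else
            Complex.sin (((ω : ℂ)^2 - lam^2) ^ ((1 : ℂ)/2)) /
              (((ω : ℂ)^2 - lam^2) ^ ((1 : ℂ)/2)))) lam₀ = 0)
    (hcrit :
      deriv (fun lam : ℂ =>
        Complex.cos (((ω : ℂ)^2 - lam^2) ^ ((1 : ℂ)/2)) -
          lam * (if (ω : ℂ)^2 - lam^2 = 0 then 1 else
            Complex.sin (((ω : ℂ)^2 - lam^2) ^ ((1 : ℂ)/2)) /
              (((ω : ℂ)^2 - lam^2) ^ ((1 : ℂ)/2)))) lam₀ = 0) :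
    lam₀ = 1 ∧ (ω^2 - 1) / ω^2 = (Real.sin (Real.sqrt (ω^2 - 1)))^2 := by
  change dispersion ω lam₀ = 0 at hroot
  change deriv (dispersion ω) lam₀ = 0 at hcrit
  set r := Real.sqrt (ω ^ 2 - 1)
  have hr : r ^ 2 = ω ^ 2 - 1 := Real.sq_sqrt (by nlinarith)
  have hr0 : (r : ℂ) ≠ 0 := by exact_mod_cast (Real.sqrt_pos.2 (by nlinarith)).ne'
  have hrC : (r : ℂ) ^ 2 = (ω : ℂ) ^ 2 - 1 ^ 2 := by exact_mod_cast hr.trans (by ring)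
  have hu1 : (ω : ℂ) ^ 2 - 1 ^ 2 ≠ 0 := hrC ▸ pow_ne_zero 2 hr0
  have hu : (ω : ℂ) ^ 2 - lam₀ ^ 2 ≠ 0 := by
    intro hu
    rw [dispersion_eq_one_sub_of_sq_sub_sq_eq_zero hu, sub_eq_zero] at hroot
    exact hu1 (hroot ▸ hu)
  have hlam : lam₀ = 1 := by
    have hF' := (hasDerivAt_dispersion ω hu).deriv
    rw [hcrit, hroot] at hF'
    simpa [hu, sincSqrt_ne_zero_of_dispersion_eq_zero hroot, sub_eq_zero,
      (zero_lt_one.trans hω).ne'] using hF'.symm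
  subst hlam
  rw [dispersion, cosSqrt_eq_cos hrC, sincSqrt_eq_sin_div hu1 hrC, one_mul, sub_eq_zero,
    eq_div_iff hr0, ← ofReal_cos, ← ofReal_sin, ← ofReal_mul] at hroot
  refine ⟨rfl, ?_⟩
  rw [← hr, show ω ^ 2 = r ^ 2 + 1 by linarith]
  exact div_add_one_eq_sin_sq_of_mul_cos_eq_sin (by rw [mul_comm]; exact_mod_cast hroot)
end

section
/- Let ω > 1. There exists an absolute constant c₀ > 0 (independent of ω) such that the set S = {λ = a + ib ∈ ℂ : |a| ≥ c₀ω, |b| ≤ |a|} contains no roots of the equation sin(κ)/κ = ±1/ω with κ² = ω² − λ², i.e. no roots of sin²κ = κ²/ω². -/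
/-!
Let `κ` be any square root of `ω² - λ²`. Then `‖sin κ‖² = sin² (re κ) + sinh² (im κ)`, and on `S`
with `c₀ = 3` the square root is nearly imaginary: `(im κ)² ≥ (re λ)² - ω² ≥ 8 ω² > 8` and
`‖κ‖² ≤ ω² + 2 (re λ)² ≤ 3 (im κ)²`. As `sinh² y ≥ y² + y⁴/4 > 3 y²` once `y² > 8`, this gives
`‖sin κ‖² > ‖κ‖² ≥ ‖κ‖² / ω²`, so `sin² κ = κ² / ω²` is impossible.
-/

open Complex

theorem Real.one_add_sq_div_two_le_cosh (x : ℝ) : 1 + x ^ 2 / 2 ≤ Real.cosh x := by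
  have h := sum_le_hasSum (Finset.range 2) (fun n _ => by rw [pow_mul]; positivity)
    (Real.hasSum_cosh x)
  simpa [Finset.sum_range_succ] using h

theorem Real.sq_add_pow_four_div_four_le_sinh_sq (x : ℝ) : x ^ 2 + x ^ 4 / 4 ≤ Real.sinh x ^ 2 := by
  have h := Real.one_add_sq_div_two_le_cosh x
  rw [Real.sinh_sq]
  nlinarith [sq_nonneg x]

theorem Complex.sq_norm_sin (z : ℂ) : ‖sin z‖ ^ 2 = Real.sin z.re ^ 2 + Real.sinh z.im ^ 2 := by
  rw [Complex.sq_norm, normSq_apply, sin_eq]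
  simp only [add_re, add_im, mul_re, mul_im, I_re, I_im, sin_ofReal_re, sin_ofReal_im,
    cos_ofReal_re, cos_ofReal_im, sinh_ofReal_re, sinh_ofReal_im, cosh_ofReal_re, cosh_ofReal_im]
  nlinarith [Real.sin_sq_add_cos_sq z.re, Real.cosh_sq z.im]

theorem Complex.im_sq_eq_norm_sq_sub_re_sq_div_two (z : ℂ) :
    z.im ^ 2 = (‖z ^ 2‖ - (z ^ 2).re) / 2 := by
  rw [norm_pow, Complex.sq_norm, normSq_apply, sq z, mul_re]; ring

theorem Complex.norm_sq_lt_sq_norm_sin {z : ℂ} (him : 8 < z.im ^ 2)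
    (hz : ‖z‖ ^ 2 ≤ 3 * z.im ^ 2) : ‖z‖ ^ 2 < ‖sin z‖ ^ 2 := by
  have h_sinh := Real.sq_add_pow_four_div_four_le_sinh_sq z.im
  rw [Complex.sq_norm_sin]
  nlinarith [sq_nonneg (Real.sin z.re)]

theorem Complex.re_sq_sub_sq_le_im_sq {κ lam : ℂ} {ω : ℝ} (h : κ ^ 2 = ω ^ 2 - lam ^ 2) :
    lam.re ^ 2 - ω ^ 2 ≤ κ.im ^ 2 := by
  have h_norm : ‖lam ^ 2‖ - ‖(ω : ℂ) ^ 2‖ ≤ ‖κ ^ 2‖ := by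
    rw [h, norm_sub_rev]
    exact norm_sub_norm_le _ _
  have h_re : (κ ^ 2).re = ω ^ 2 - (lam.re ^ 2 - lam.im ^ 2) := by
    rw [h]
    simp [sq, mul_re]
  rw [norm_pow, norm_pow, Complex.sq_norm, normSq_apply, norm_real, Real.norm_eq_abs,
    sq_abs] at h_norm
  rw [im_sq_eq_norm_sq_sub_re_sq_div_two κ, h_re]
  nlinarith

/-- There is an absolute constant `c₀ > 0` such that for every `ω > 1`, the set
`S = {λ = a + ib : |a| ≥ c₀ ω, |b| ≤ |a|}` contains no roots of
`sin²κ = κ²/ω²` with `κ² = ω² - λ²`. -/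
theorem trapped_modes_stmt8 :
    ∃ c₀ : ℝ, 0 < c₀ ∧ ∀ ω : ℝ, 1 < ω → ∀ lam : ℂ,
      c₀ * ω ≤ |lam.re| → |lam.im| ≤ |lam.re| →
      (Complex.sin (((ω : ℂ)^2 - lam^2) ^ ((1 : ℂ)/2)))^2 ≠
        ((ω : ℂ)^2 - lam^2) / (ω : ℂ)^2 := by
  refine ⟨3, by norm_num, fun ω hω lam hre him hroot => ?_⟩
  set κ := ((ω : ℂ) ^ 2 - lam ^ 2) ^ ((1 : ℂ) / 2)
  have hκ : κ ^ 2 = ω ^ 2 - lam ^ 2 := by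
    have h := cpow_nat_inv_pow ((ω : ℂ) ^ 2 - lam ^ 2) two_ne_zero
    rwa [Nat.cast_ofNat, ← one_div] at h
  rw [← hκ] at hroot
  have h_im := re_sq_sub_sq_le_im_sq hκ
  have h_norm : ‖κ‖ ^ 2 ≤ ω ^ 2 + 2 * lam.re ^ 2 := by
    have h_im_le : lam.im ^ 2 ≤ lam.re ^ 2 := sq_le_sq.mpr him
    have h := norm_sub_le ((ω : ℂ) ^ 2) (lam ^ 2)
    rw [← hκ, norm_pow, norm_pow, norm_pow, norm_real, Real.norm_eq_abs, sq_abs,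
      Complex.sq_norm lam, normSq_apply] at h
    nlinarith
  have h_root : ‖sin κ‖ ^ 2 ≤ ‖κ‖ ^ 2 := by
    have h := congrArg norm hroot
    rw [norm_pow, norm_div, norm_pow, norm_pow, norm_real, Real.norm_eq_abs, sq_abs] at h
    rw [h]
    exact div_le_self (by positivity) (by nlinarith)
  have hω2 : 9 * ω ^ 2 ≤ lam.re ^ 2 := by nlinarith [sq_abs lam.re]
  have h_sin := norm_sq_lt_sq_norm_sin (z := κ) (by nlinarith) (by nlinarith)
  linarith
end

section
/- Let ω > 0, and for j, k and signs τ, θ let w_jτ(x,y) = e^{−iλ_jτ y}(sin(κ_jτ x), (−1)^{j+1} i sin(κ_jτ(x−1))) with κ_jτ real satisfying sin(κ_jτ)/κ_jτ = (−1)^{j+1}/ω and λ_jτ = κ_jτ cot(κ_jτ). Then the symplectic form satisfies q(w_jτ, w_jτ) = (i/ω)(λ_jτ − 1). -/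
/-!
The phase `e^{-iλy}` has modulus one, so it cancels in `u·v̄ - v·ū`, which leaves
`-2iε sin(κx) sin(κ(x-1))` with `ε = (-1)^{j+1}`. By product-to-sum the integral of
`sin(κx) sin(κ(x-1))` over `[0,1]` is `(cos κ - sin κ/κ)/2`, and the dispersion relations
`sin κ/κ = ε/ω`, `λ = κ cot κ` together with `ε² = 1` turn `ε(cos κ - sin κ/κ)` into `(λ - 1)/ω`.
-/

open Real intervalIntegral

lemma sin_mul_sin_eq_cos_sub_cos (a b : ℝ) :
    sin a * sin b = (cos (a - b) - cos (a + b)) / 2 := by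
  rw [cos_sub, cos_add]; ring

lemma integral_sin_mul_sin_mul_sub_one {κ : ℝ} (hκ : κ ≠ 0) :
    ∫ x in (0 : ℝ)..1, sin (κ * x) * sin (κ * (x - 1)) = (cos κ - sin κ / κ) / 2 := by
  have hcos : ∫ x in (0 : ℝ)..1, cos (2 * κ * x - κ) = sin κ / κ := by
    rw [integral_comp_mul_sub cos (mul_ne_zero two_ne_zero hκ), integral_cos,
      show 2 * κ * 1 - κ = κ by ring, show 2 * κ * 0 - κ = -κ by ring, sin_neg, smul_eq_mul]
    field_simp
    ring
  simp_rw [sin_mul_sin_eq_cos_sub_cos, show ∀ x, κ * x - κ * (x - 1) = κ by intro x; ring,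
    show ∀ x, κ * x + κ * (x - 1) = 2 * κ * x - κ by intro x; ring]
  have hint : IntervalIntegrable (fun x => cos (2 * κ * x - κ)) MeasureTheory.volume 0 1 :=
    (by fun_prop : Continuous fun x => cos (2 * κ * x - κ)).intervalIntegrable 0 1
  rw [integral_div, integral_sub intervalIntegrable_const hint, hcos]
  simp

lemma mul_conj_sub_mul_conj_of_norm_eq_one {E : ℂ} (hE : ‖E‖ = 1) (a b c : ℝ) :
    E * a * starRingEnd ℂ (E * (c * Complex.I * b))
        - E * (c * Complex.I * b) * starRingEnd ℂ (E * a) = -2 * Complex.I * c * (a * b : ℝ) := by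
  have hEE : E * starRingEnd ℂ E = 1 := by
    rw [Complex.mul_conj, Complex.normSq_eq_norm_sq, hE]; norm_num
  simp only [map_mul, Complex.conj_ofReal, Complex.conj_I]
  push_cast
  linear_combination (-2 * Complex.I * c * a * b) * hEE

lemma norm_exp_neg_I_mul (t s : ℝ) : ‖Complex.exp (-Complex.I * t * s)‖ = 1 := by
  rw [Complex.norm_exp]; simp

lemma mul_cos_sub_sin_div_eq {ω κ lam ε : ℝ} (hε : ε ^ 2 = 1) (hω : ω ≠ 0) (hκ : κ ≠ 0)
    (hsin : sin κ ≠ 0) (h1 : sin κ / κ = ε / ω) (h2 : lam = κ * (cos κ / sin κ)) :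
    ε * (cos κ - sin κ / κ) = (lam - 1) / ω := by
  rw [div_eq_div_iff hκ hω] at h1
  subst h2
  field_simp
  linear_combination (ε * (κ * cos κ - sin κ)) * h1 + (κ * (κ * cos κ - sin κ)) * hε

theorem trapped_modes_stmt11_general (ω κ lam : ℝ) (j : ℕ) (hω : 0 < ω)
    (h1 : Real.sin κ / κ = (-1 : ℝ)^(j+1) / ω)
    (h2 : lam = κ * (Real.cos κ / Real.sin κ)) (y : ℝ) :
    let u : ℝ → ℂ := fun x =>
      Complex.exp (-Complex.I * lam * y) * Complex.sin (κ * x)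
    let v : ℝ → ℂ := fun x =>
      Complex.exp (-Complex.I * lam * y) *
        ((-1 : ℂ)^(j+1) * Complex.I * Complex.sin (κ * ((x : ℂ) - 1)))
    let q : ℂ :=
      -(∫ x in (0:ℝ)..1, (u x * (starRingEnd ℂ) (v x) - v x * (starRingEnd ℂ) (u x)))
    q = Complex.I / (ω : ℂ) * ((lam : ℂ) - 1) := by
  intro u v q
  set ε : ℝ := (-1) ^ (j + 1)
  have hε : ε ^ 2 = 1 := by rw [← pow_mul, mul_comm, pow_mul]; norm_num
  obtain ⟨hsin, hκ⟩ : sin κ ≠ 0 ∧ κ ≠ 0 :=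
    div_ne_zero_iff.mp (h1 ▸ div_ne_zero (pow_ne_zero _ (by norm_num)) hω.ne')
  have hintegrand : ∀ x : ℝ, u x * starRingEnd ℂ (v x) - v x * starRingEnd ℂ (u x)
      = -2 * Complex.I * ε * (sin (κ * x) * sin (κ * (x - 1)) : ℝ) := by
    intro x
    simp only [u, v]
    rw [show (κ : ℂ) * x = ((κ * x : ℝ) : ℂ) by push_cast; ring,
      show (κ : ℂ) * ((x : ℂ) - 1) = ((κ * (x - 1) : ℝ) : ℂ) by push_cast; ring,
      ← Complex.ofReal_sin, ← Complex.ofReal_sin,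
      show (-1 : ℂ) ^ (j + 1) = ε by push_cast [ε]; rfl]
    exact mul_conj_sub_mul_conj_of_norm_eq_one (norm_exp_neg_I_mul lam y) _ _ ε
  have hq : q = Complex.I * ε * ((cos κ - sin κ / κ : ℝ) : ℂ) := by
    simp only [q, hintegrand, intervalIntegral.integral_const_mul, intervalIntegral.integral_ofReal,
      integral_sin_mul_sin_mul_sub_one hκ]
    push_cast
    ring
  rw [hq, mul_assoc, ← Complex.ofReal_mul, mul_cos_sub_sin_div_eq hε hω.ne' hκ hsin h1 h2]
  push_cast
  ring

/-- For the oscillatory wave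
`w_jτ(x,y) = e^{-iλy}(sin(κx), (-1)^{j+1} i sin(κ(x-1)))` with real `κ`
satisfying `sin κ/κ = (-1)^{j+1}/ω` and `λ = κ cot κ`, one has
`q(w_jτ, w_jτ) = (i/ω)(λ - 1)`. -/
theorem trapped_modes_stmt11 (ω κ lam : ℝ) (j : ℕ) (hω : 0 < ω) (hκ : κ ≠ 0)
    (h1 : Real.sin κ / κ = (-1 : ℝ)^(j+1) / ω)
    (h2 : lam = κ * (Real.cos κ / Real.sin κ)) (y : ℝ) :
    let u : ℝ → ℂ := fun x =>
      Complex.exp (-Complex.I * lam * y) * Complex.sin (κ * x)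
    let v : ℝ → ℂ := fun x =>
      Complex.exp (-Complex.I * lam * y) *
        ((-1 : ℂ)^(j+1) * Complex.I * Complex.sin (κ * ((x : ℂ) - 1)))
    let q : ℂ :=
      -(∫ x in (0:ℝ)..1, (u x * (starRingEnd ℂ) (v x) - v x * (starRingEnd ℂ) (u x)))
    q = Complex.I / (ω : ℂ) * ((lam : ℂ) - 1) :=
  trapped_modes_stmt11_general ω κ lam j hω h1 h2 y
end

section
/- Let λ₊, λ₋ ∈ ℂ with λ₋ = conj(λ₊), Im λ₊ ≠ 0, and let α₁, β₁, α₂, β₂ ∈ ℂ satisfy conj(β₁) = α₁, conj(β₂) = α₂, the normalization relations α₁conj(β₁)(λ₊−1) + β₁conj(α₁)(λ₋−1) = ω, α₂conj(β₂)(λ₊−1) + β₂conj(α₂)(λ₋−1) = −ω (ω > 0), and the orthogonality relation α₁conj(β₂)(λ₊−1) + β₁conj(α₂)(λ₋−1) = 0, with α₂, β₁, β₂ ≠ 0. Then α₁/α₂ = β₂/β₁ and |α₁/α₂| = 1. -/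
/-!
Write `z = λ₊ - 1` and `β = conj α`. The three relations say that `p = α₁² z`, `q = α₂² z` and
`r = α₁ α₂ z` have real parts `ω/2`, `-ω/2` and `0`. Since `r² = p q` is then a nonpositive real
number, `Im (p q) = Re p · (Im q - Im p)` vanishes, so `q = -conj p` and `|α₁|² |z| = |α₂|² |z|`.
Finally `|α₁| = |α₂|` is the same as `α₁ conj α₁ = α₂ conj α₂`, i.e. `α₁ / α₂ = conj α₂ / conj α₁`.
-/

open ComplexConjugate

namespace Complex

theorem eq_neg_conj_of_sq_eq_mul {p q r : ℂ} (hr : r ^ 2 = p * q) (hr_re : r.re = 0)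
    (hq_re : q.re = -p.re) (hp_re : p.re ≠ 0) : q = -conj p := by
  have him : p.re * (q.im - p.im) = 0 := by
    have hr_im := congrArg Complex.im hr
    simp only [sq, mul_im, hr_re, hq_re] at hr_im
    linear_combination -hr_im
  apply ext
  · simp [hq_re]
  · simpa [sub_eq_zero] using (mul_eq_zero.mp him).resolve_left hp_re

theorem norm_eq_of_re_mul_mul {a b z : ℂ} {c : ℝ} (hc : c ≠ 0) (ha : (a * a * z).re = c)
    (hb : (b * b * z).re = -c) (hab : (a * b * z).re = 0) : ‖a‖ = ‖b‖ := by
  have hz : z ≠ 0 := by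
    rintro rfl
    simp only [mul_zero, zero_re] at ha
    exact hc ha.symm
  have hq : b * b * z = -conj (a * a * z) :=
    eq_neg_conj_of_sq_eq_mul (by ring) hab (by rw [ha, hb]) (by rwa [ha])
  have hnorm : ‖a‖ ^ 2 * ‖z‖ = ‖b‖ ^ 2 * ‖z‖ := by
    simpa [sq, norm_mul, norm_neg, norm_conj] using (congrArg norm hq).symm
  exact (sq_eq_sq₀ (norm_nonneg a) (norm_nonneg b)).mp
    (mul_right_cancel₀ (norm_ne_zero_iff.mpr hz) hnorm)

theorem mul_add_conj_mul_eq_two_mul_re (a b w : ℂ) :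
    a * b * (w - 1) + conj a * conj b * (conj w - 1) = 2 * ((a * b * (w - 1)).re : ℂ) := by
  rw [re_eq_add_conj]
  simp only [map_mul, map_sub, map_one]
  ring

theorem div_eq_conj_div_conj_of_norm_eq {a b : ℂ} (hb : b ≠ 0) (h : ‖a‖ = ‖b‖) :
    a / b = conj b / conj a := by
  have ha : conj a ≠ 0 := by
    rw [map_ne_zero, ← norm_ne_zero_iff, h, norm_ne_zero_iff]
    exact hb
  rw [div_eq_div_iff hb ha, mul_conj', mul_comm, mul_conj', h]

end Complex

theorem trapped_modes_stmt12_general (ω : ℝ) (hω : 0 < ω) (lamp lamm α₁ β₁ α₂ β₂ : ℂ)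
    (hconj : lamm = (starRingEnd ℂ) lamp)
    (hb1 : (starRingEnd ℂ) β₁ = α₁) (hb2 : (starRingEnd ℂ) β₂ = α₂)
    (hn1 : α₁ * (starRingEnd ℂ) β₁ * (lamp - 1) + β₁ * (starRingEnd ℂ) α₁ * (lamm - 1) = (ω : ℂ))
    (hn2 : α₂ * (starRingEnd ℂ) β₂ * (lamp - 1) + β₂ * (starRingEnd ℂ) α₂ * (lamm - 1) = -(ω : ℂ))
    (ho : α₁ * (starRingEnd ℂ) β₂ * (lamp - 1) + β₁ * (starRingEnd ℂ) α₂ * (lamm - 1) = 0) :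
    α₁ / α₂ = β₂ / β₁ ∧ ‖α₁ / α₂‖ = 1 := by
  obtain rfl : β₁ = conj α₁ := by rw [← hb1, Complex.conj_conj]
  obtain rfl : β₂ = conj α₂ := by rw [← hb2, Complex.conj_conj]
  subst hconj
  simp only [Complex.conj_conj, Complex.mul_add_conj_mul_eq_two_mul_re] at hn1 hn2 ho
  norm_cast at hn1 hn2 ho
  have hnorm : ‖α₁‖ = ‖α₂‖ :=
    Complex.norm_eq_of_re_mul_mul (z := lamp - 1) (c := ω / 2) (by positivity) (by linarith)
      (by linarith) (by linarith)
  have hα₂ : α₂ ≠ 0 := by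
    rintro rfl
    simp only [mul_zero, zero_mul, Complex.zero_re, zero_eq_neg] at hn2
    exact hω.ne' hn2
  refine ⟨Complex.div_eq_conj_div_conj_of_norm_eq hα₂ hnorm, ?_⟩
  rw [norm_div, hnorm, div_self (norm_ne_zero_iff.mpr hα₂)]

/-- Proposition 2 of the paper: the algebraic relations among the coefficients
`α₁, β₁, α₂, β₂` of the biorthogonalized waves imply `α₁/α₂ = β₂/β₁` and
`|α₁/α₂| = 1`. -/
theorem trapped_modes_stmt12 (ω : ℝ) (hω : 0 < ω) (lamp lamm α₁ β₁ α₂ β₂ : ℂ)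
    (hconj : lamm = (starRingEnd ℂ) lamp) (him : lamp.im ≠ 0)
    (hb1 : (starRingEnd ℂ) β₁ = α₁) (hb2 : (starRingEnd ℂ) β₂ = α₂)
    (hn1 : α₁ * (starRingEnd ℂ) β₁ * (lamp - 1) + β₁ * (starRingEnd ℂ) α₁ * (lamm - 1) = (ω : ℂ))
    (hn2 : α₂ * (starRingEnd ℂ) β₂ * (lamp - 1) + β₂ * (starRingEnd ℂ) α₂ * (lamm - 1) = -(ω : ℂ))
    (ho : α₁ * (starRingEnd ℂ) β₂ * (lamp - 1) + β₁ * (starRingEnd ℂ) α₂ * (lamm - 1) = 0)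
    (ha2 : α₂ ≠ 0) (hb1' : β₁ ≠ 0) (hb2' : β₂ ≠ 0) :
    α₁ / α₂ = β₂ / β₁ ∧ ‖α₁ / α₂‖ = 1 :=
  trapped_modes_stmt12_general ω hω lamp lamm α₁ β₁ α₂ β₂ hconj hb1 hb2 hn1 hn2 ho
end

section
/- Let λ = ξ + iσ with ξ ∈ ℝ, |ξ| large, σ fixed, and κ² = ω² − λ² with ω > 1 fixed. Then the Green function L(x,z) of the problem −u'' + (λ² − ω²)u = f on (0,1) with Dirichlet conditions u(0) = u(1) = 0, given by L(x,z) = sin(κ x_<)·sin(κ(1 − x_>))/(κ sin κ) (where x_< = min(x,z), x_> = max(x,z)), satisfies |L(x,z)| ≤ (C/|ξ|)·e^{−|ξ||x−z|} for all x, z ∈ [0,1], for some constant C depending only on ω and σ, provided |ξ| is sufficiently large. -/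
/-!
Put `t = |Im κ|`. The real part of `κ² = ω² - λ²` is `ω² + σ² - ξ²`, so `t ≥ |ξ| - 1` once `|ξ|`
is large. Since `|sin w| ≤ e^{|Im w|}` and `|sin κ| ≥ sinh t ≥ e^t / 4`, the numerator of the kernel
is at most `e^{t(1 - |x - z|)}` and its denominator at least `t e^t / 4`, whence
`|L(x,z)| ≤ (4 / t) e^{-t|x - z|} ≤ (8e / |ξ|) e^{-|ξ||x - z|}`; the factor `e` pays for replacing
`t` by `|ξ|` in the exponent, as `|x - z| ≤ 1`.
-/

open Complex

lemma Real.cosh_le_exp_abs (x : ℝ) : Real.cosh x ≤ Real.exp |x| := by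
  rw [← Real.cosh_abs, Real.cosh_eq]
  have : Real.exp (-|x|) ≤ Real.exp |x| := Real.exp_le_exp.2 (by linarith [abs_nonneg x])
  linarith

lemma Real.exp_div_four_le_sinh {t : ℝ} (ht : 1 ≤ t) : Real.exp t / 4 ≤ Real.sinh t := by
  have h2 : 2 ≤ Real.exp t := by linarith [Real.add_one_le_exp t]
  have h1 : Real.exp (-t) ≤ 1 := Real.exp_le_one_iff.2 (by linarith)
  rw [Real.sinh_eq]
  linarith

lemma Real.four_div_mul_exp_neg_le {a t d : ℝ} (ha : 2 ≤ a) (ht : a - 1 ≤ t) (hd₀ : 0 ≤ d)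
    (hd₁ : d ≤ 1) : 4 / t * Real.exp (-(t * d)) ≤ 8 * Real.exp 1 / a * Real.exp (-a * d) := by
  have hexp : Real.exp (-(t * d)) ≤ Real.exp 1 * Real.exp (-a * d) := by
    rw [← Real.exp_add]
    exact Real.exp_le_exp.2 (by nlinarith)
  have hinv : 4 / t ≤ 8 / a := by
    rw [div_le_div_iff₀ (by linarith) (by linarith)]
    linarith
  calc 4 / t * Real.exp (-(t * d)) ≤ 8 / a * (Real.exp 1 * Real.exp (-a * d)) := by gcongr
    _ = 8 * Real.exp 1 / a * Real.exp (-a * d) := by ring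

namespace Complex

lemma norm_exp_mul_I (z : ℂ) : ‖exp (z * I)‖ = Real.exp (-z.im) := by
  simp [norm_exp]

lemma norm_two_mul_sin (z : ℂ) : ‖2 * sin z‖ = ‖exp (-z * I) - exp (z * I)‖ := by
  rw [two_sin, norm_mul, norm_I, mul_one]

lemma norm_sin_le_cosh_im (z : ℂ) : ‖sin z‖ ≤ Real.cosh z.im := by
  have h := norm_sub_le (exp (-z * I)) (exp (z * I))
  rw [← norm_two_mul_sin, norm_mul, Complex.norm_two, norm_exp_mul_I, norm_exp_mul_I, neg_im,
    neg_neg] at h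
  rw [Real.cosh_eq]
  linarith

lemma abs_sinh_im_le_norm_sin (z : ℂ) : |Real.sinh z.im| ≤ ‖sin z‖ := by
  have h := abs_norm_sub_norm_le (exp (-z * I)) (exp (z * I))
  rw [← norm_two_mul_sin, norm_mul, Complex.norm_two, norm_exp_mul_I, norm_exp_mul_I, neg_im,
    neg_neg] at h
  rw [Real.sinh_eq, abs_div, abs_two]
  linarith

lemma norm_sin_le_exp_abs_im (z : ℂ) : ‖sin z‖ ≤ Real.exp |z.im| :=
  (norm_sin_le_cosh_im z).trans (Real.cosh_le_exp_abs _)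

lemma exp_abs_im_div_four_le_norm_sin {z : ℂ} (h : 1 ≤ |z.im|) :
    Real.exp |z.im| / 4 ≤ ‖sin z‖ :=
  (Real.exp_div_four_le_sinh h).trans (Real.abs_sinh z.im ▸ abs_sinh_im_le_norm_sin z)

lemma mul_sin_ne_zero_of_one_le_abs_im {κ : ℂ} (h : 1 ≤ |κ.im|) : κ * sin κ ≠ 0 := by
  have hsin := exp_abs_im_div_four_le_norm_sin h
  refine mul_ne_zero (fun hκ ↦ ?_) (fun hκ ↦ ?_)
  · norm_num [hκ] at h
  · rw [hκ, norm_zero] at hsin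
    linarith [Real.exp_pos |κ.im|]

lemma cpow_one_div_two_sq (w : ℂ) : (w ^ ((1 : ℂ) / 2)) ^ 2 = w := by
  rw [one_div]
  exact_mod_cast cpow_nat_inv_pow w two_ne_zero

lemma sub_one_le_abs_im_of_sq_eq {κ : ℂ} {ω σ ξ : ℝ}
    (hκ : κ ^ 2 = (ω : ℂ) ^ 2 - ((ξ : ℂ) + (σ : ℂ) * I) ^ 2) (hξ : σ ^ 2 + ω ^ 2 + 1 ≤ 2 * |ξ|) :
    |ξ| - 1 ≤ |κ.im| := by
  have hre : κ.re ^ 2 - κ.im ^ 2 = ω ^ 2 + σ ^ 2 - ξ ^ 2 := by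
    have := congrArg re hκ
    simp only [sq, mul_re, sub_re, add_re, add_im, ofReal_re, ofReal_im, mul_im, I_re,
      I_im] at this
    linarith
  have hsq : (|ξ| - 1) ^ 2 ≤ κ.im ^ 2 := by nlinarith [sq_abs ξ, sq_nonneg κ.re]
  exact (le_abs_self _).trans (sq_le_sq.mp hsq)

end Complex

/-- The Dirichlet Green kernel of `-u'' - κ² u` on `(0, 1)`. -/
noncomputable def dirichletGreen (κ : ℂ) (x z : ℝ) : ℂ :=
  sin (κ * (min x z : ℝ)) * sin (κ * (1 - (max x z : ℝ))) / (κ * sin κ)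

lemma norm_dirichletGreen_le {κ : ℂ} (hκ : 1 ≤ |κ.im|) {x z : ℝ} (hx : x ∈ Set.Icc (0 : ℝ) 1)
    (hz : z ∈ Set.Icc (0 : ℝ) 1) :
    ‖dirichletGreen κ x z‖ ≤ 4 / |κ.im| * Real.exp (-(|κ.im| * |x - z|)) := by
  set t := |κ.im|
  have hm : 0 ≤ min x z := le_min hx.1 hz.1
  have hM : 0 ≤ 1 - max x z := sub_nonneg.2 (max_le hx.2 hz.2)
  have hleft : ‖sin (κ * (min x z : ℝ))‖ ≤ Real.exp (t * min x z) := by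
    simpa [mul_im, abs_mul, abs_of_nonneg hm] using norm_sin_le_exp_abs_im (κ * (min x z : ℝ))
  have hright : ‖sin (κ * (1 - (max x z : ℝ)))‖ ≤ Real.exp (t * (1 - max x z)) := by
    have := norm_sin_le_exp_abs_im (κ * ((1 - max x z : ℝ) : ℂ))
    simpa [mul_im, abs_mul, abs_of_nonneg hM] using this
  have hden : t * (Real.exp t / 4) ≤ ‖κ * sin κ‖ := by
    rw [norm_mul]
    exact mul_le_mul (abs_im_le_norm κ) (exp_abs_im_div_four_le_norm_sin hκ) (by positivity)
      (norm_nonneg κ)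
  have hexp : t * min x z + t * (1 - max x z) = t + -(t * |x - z|) := by
    rw [abs_sub_comm, ← max_sub_min_eq_abs]
    ring
  rw [dirichletGreen, norm_div, norm_mul, div_le_iff₀ (norm_pos_iff.2
    (mul_sin_ne_zero_of_one_le_abs_im hκ))]
  calc _ ≤ Real.exp (t * min x z) * Real.exp (t * (1 - max x z)) :=
        mul_le_mul hleft hright (norm_nonneg _) (Real.exp_nonneg _)
    _ = 4 / t * Real.exp (-(t * |x - z|)) * (t * (Real.exp t / 4)) := by
        rw [← Real.exp_add, hexp, Real.exp_add]
        field_simp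
    _ ≤ _ := by gcongr

theorem trapped_modes_stmt19_general (ω σ : ℝ) :
    ∃ C : ℝ, 0 < C ∧ ∃ Ξ : ℝ, ∀ ξ : ℝ, Ξ ≤ |ξ| →
      let lam : ℂ := (ξ : ℂ) + (σ : ℂ) * Complex.I
      let κ : ℂ := ((ω : ℂ)^2 - lam^2) ^ ((1 : ℂ)/2)
      κ * Complex.sin κ ≠ 0 ∧
      ∀ x ∈ Set.Icc (0:ℝ) 1, ∀ z ∈ Set.Icc (0:ℝ) 1,
        ‖(Complex.sin (κ * (min x z : ℝ)) *
            Complex.sin (κ * (1 - (max x z : ℝ))) / (κ * Complex.sin κ))‖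
          ≤ C / |ξ| * Real.exp (-|ξ| * |x - z|) := by
  refine ⟨8 * Real.exp 1, by positivity, σ ^ 2 + ω ^ 2 + 2, fun ξ hξ ↦ ?_⟩
  intro lam κ
  have hsq_nonneg : 0 ≤ σ ^ 2 + ω ^ 2 := by positivity
  have ht : |ξ| - 1 ≤ |κ.im| :=
    sub_one_le_abs_im_of_sq_eq (cpow_one_div_two_sq _) (by linarith)
  have hκ : 1 ≤ |κ.im| := by linarith
  refine ⟨mul_sin_ne_zero_of_one_le_abs_im hκ, fun x hx z hz ↦ ?_⟩
  have hd : |x - z| ≤ 1 := abs_sub_le_iff.2 ⟨by linarith [hx.2, hz.1], by linarith [hx.1, hz.2]⟩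
  calc _ = ‖dirichletGreen κ x z‖ := rfl
    _ ≤ 4 / |κ.im| * Real.exp (-(|κ.im| * |x - z|)) := norm_dirichletGreen_le hκ hx hz
    _ ≤ _ := Real.four_div_mul_exp_neg_le (by linarith) ht (abs_nonneg _) hd

/-- Kernel estimate for the Green function of `-u'' + (λ² - ω²)u = f` on `(0,1)`
with Dirichlet conditions, `λ = ξ + iσ`, `κ² = ω² - λ²`: for `|ξ|` large,
`|L(x,z)| ≤ (C/|ξ|) e^{-|ξ||x-z|}` with `C = C(ω,σ)`. -/
theorem trapped_modes_stmt19 (ω σ : ℝ) (hω : 1 < ω) :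
    ∃ C : ℝ, 0 < C ∧ ∃ Ξ : ℝ, ∀ ξ : ℝ, Ξ ≤ |ξ| →
      let lam : ℂ := (ξ : ℂ) + (σ : ℂ) * Complex.I
      let κ : ℂ := ((ω : ℂ)^2 - lam^2) ^ ((1 : ℂ)/2)
      κ * Complex.sin κ ≠ 0 ∧
      ∀ x ∈ Set.Icc (0:ℝ) 1, ∀ z ∈ Set.Icc (0:ℝ) 1,
        ‖(Complex.sin (κ * (min x z : ℝ)) *
            Complex.sin (κ * (1 - (max x z : ℝ))) / (κ * Complex.sin κ))‖
          ≤ C / |ξ| * Real.exp (-|ξ| * |x - z|) :=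
  trapped_modes_stmt19_general ω σ
end
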